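/- arXiv:0903.0307 — 3 statements merged into one kernel-verified Lean document; each statement's English description precedes it below -/
import Mathlib

section
/- Fix ȳ ∈ {0,1}^N. With P(ū | ȳ) = ∏_{i=0}^{N−1} P(u_i | u₀^{i−1}, ȳ) and Q(ū | ȳ) = ∏_{i=0}^{N−1} Q(u_i | u₀^{i−1}, ȳ), where Q(u_i | u₀^{i−1}, ȳ) = 1/2 for i ∈ F and equals P(u_i | u₀^{i−1}, ȳ) for i ∉ F, one has Σ_{ū∈{0,1}^N} |Q(ū | ȳ) − P(ū | ȳ)| ≤ 2 Σ_{i∈F} Σ_{u₀^{i−1}} (∏_{j=0}^{i−1} P(u_j | u₀^{j−1}, ȳ)) · |1/2 − P(0 | u₀^{i−1}, ȳ)|. -/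
open Finset

noncomputable section

/-- The polarization kernel `G₂ = [[1,0],[1,1]]` over GF(2). -/
def G2 : Matrix (Fin 2) (Fin 2) (ZMod 2) := !![1, 0; 1, 1]

/-- Index identification `Fin 2 × Fin (2^n) ≃ Fin (2^(n+1))`. -/
def finPowEquiv (n : ℕ) : Fin 2 × Fin (2 ^ n) ≃ Fin (2 ^ (n + 1)) :=
  finProdFinEquiv.trans (finCongr (by rw [pow_succ]; ring))

/-- The `n`-fold Kronecker power `G₂^{⊗n}` over GF(2). -/
def kronPow : (n : ℕ) → Matrix (Fin (2 ^ n)) (Fin (2 ^ n)) (ZMod 2)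
  | 0 => 1
  | n + 1 => Matrix.reindex (finPowEquiv n) (finPowEquiv n)
      (Matrix.kroneckerMap (· * ·) G2 (kronPow n))

/-- Reversal of the `n`-bit binary expansion of `i`. -/
def bitRevNat (n i : ℕ) : ℕ :=
  ∑ k ∈ Finset.range n, if Nat.testBit i (n - 1 - k) then 2 ^ k else 0

lemma sum_range_two_pow_lt (n : ℕ) : ∑ k ∈ Finset.range n, 2 ^ k < 2 ^ n := by
  induction n with
  | zero => simp
  | succ m ih => rw [Finset.sum_range_succ, pow_succ]; omega

lemma bitRevNat_lt (n i : ℕ) : bitRevNat n i < 2 ^ n := by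
  have h1 : bitRevNat n i ≤ ∑ k ∈ Finset.range n, 2 ^ k :=
    Finset.sum_le_sum (fun k _ => by split <;> simp)
  have h2 := sum_range_two_pow_lt n
  omega

/-- The bit-reversal permutation matrix `Aₙ`. -/
def bitRevMatrix (n : ℕ) : Matrix (Fin (2 ^ n)) (Fin (2 ^ n)) (ZMod 2) :=
  fun i j => if (j : ℕ) = bitRevNat n (i : ℕ) then 1 else 0

/-- The polar transform matrix `Hₙ = Aₙ G₂^{⊗n}`. -/
def polarH (n : ℕ) : Matrix (Fin (2 ^ n)) (Fin (2 ^ n)) (ZMod 2) :=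
  bitRevMatrix n * kronPow n

/-- BSC(D) transition probability `W(y∣x)`. -/
def bsc (D : ℝ) (y x : ZMod 2) : ℝ := if y = x then 1 - D else D

/-- The polar transform `x̄ = ū Hₙ` of a word `ū`. -/
def polarEnc (n : ℕ) (u : Fin (2 ^ n) → ZMod 2) : Fin (2 ^ n) → ZMod 2 :=
  Matrix.vecMul u (polarH n)

/-- `W^{(i)}(ȳ, u₀^{i−1} ∣ u_i)`; it depends on `u` only through coordinates `≤ i`,
the coordinates `> i` being summed out. -/
def Wi (D : ℝ) (n : ℕ) (y : Fin (2 ^ n) → ZMod 2) (i : Fin (2 ^ n))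
    (u : Fin (2 ^ n) → ZMod 2) : ℝ :=
  ((2 : ℝ) ^ (2 ^ n - 1))⁻¹ *
    ∑ v ∈ Finset.univ.filter (fun v : Fin (2 ^ n) → ZMod 2 => ∀ j, j ≤ i → v j = u j),
      ∏ j, bsc D (y j) (polarEnc n v j)

/-- The posterior `P(u_i ∣ u₀^{i−1}, ȳ)`. -/
def post (D : ℝ) (n : ℕ) (y : Fin (2 ^ n) → ZMod 2) (i : Fin (2 ^ n))
    (u : Fin (2 ^ n) → ZMod 2) : ℝ :=
  Wi D n y i u /
    (Wi D n y i (Function.update u i 0) + Wi D n y i (Function.update u i 1))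

/-!
Telescoping `∏ Q - ∏ P` along the order of the coordinates bounds `|∏ Q - ∏ P|` by the sum
over `i` of `(∏_{j<i} P_j) |Q_i - P_i| (∏_{j>i} Q_j)`, in which only frozen positions `i ∈ F`
survive. For those, `Q_i = 1/2` turns the term into `2 (∏_{j<i} P_j) |1/2 - P_i| (∏_{j≥i} Q_j)`,
and `|1/2 - P_i|` is the same for both values of the bit `u_i`. Both `P` and `Q` are causal
kernels, so summing out the coordinates `≥ i` removes `∏_{j≥i} Q_j` and leaves the sum over
the pasts `u₀^{i−1}`.
-/

theorem abs_prod_sub_prod_le {ι R : Type*} [LinearOrder ι] [CommRing R] [LinearOrder R]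
    [IsStrictOrderedRing R] (s : Finset ι) {f g : ι → R} (hf : ∀ i ∈ s, 0 ≤ f i)
    (hg : ∀ i ∈ s, 0 ≤ g i) :
    |∏ i ∈ s, g i - ∏ i ∈ s, f i| ≤
      ∑ i ∈ s, (∏ j ∈ s with j < i, f j) * |g i - f i| * ∏ j ∈ s with i < j, g j := by
  have htel := prod_add_ordered s g (fun i => f i - g i)
  simp only [add_sub_cancel] at htel
  rw [htel, sub_add_cancel_left, abs_neg]
  refine (abs_sum_le_sum_abs _ _).trans_eq (sum_congr rfl fun i hi => ?_)
  have hf' : 0 ≤ ∏ j ∈ s with j < i, f j := prod_nonneg fun j hj => hf j (mem_filter.1 hj).1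
  have hg' : 0 ≤ ∏ j ∈ s with i < j, g j := prod_nonneg fun j hj => hg j (mem_filter.1 hj).1
  rw [abs_mul, abs_mul, abs_of_nonneg hf', abs_of_nonneg hg', abs_sub_comm, mul_comm |_|]

theorem ZMod.sum_univ_two {M : Type*} [AddCommMonoid M] (f : ZMod 2 → M) :
    ∑ b, f b = f 0 + f 1 :=
  Fin.sum_univ_two f

/-- `Q i u` is the conditional probability of the letter `u i` given the letters `u j`, `j < i`. -/
structure IsCausalKernel {ι α : Type*} [Preorder ι] [DecidableEq ι] [Fintype α]
    (Q : ι → (ι → α) → ℝ) : Prop where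
  nonneg : ∀ i u, 0 ≤ Q i u
  sum_update : ∀ i u, ∑ b, Q i (Function.update u i b) = 1
  congr : ∀ i {u v : ι → α}, (∀ j ≤ i, u j = v j) → Q i u = Q i v

namespace IsCausalKernel

section

variable {ι : Type*} [PartialOrder ι] [DecidableEq ι]

theorem ite {α : Type*} [Fintype α] {P Q : ι → (ι → α) → ℝ} (hP : IsCausalKernel P)
    (hQ : IsCausalKernel Q) (F : Finset ι) :
    IsCausalKernel fun i u => if i ∈ F then Q i u else P i u where
  nonneg i u := by split_ifs; exacts [hQ.nonneg i u, hP.nonneg i u]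
  sum_update i u := by split_ifs; exacts [hQ.sum_update i u, hP.sum_update i u]
  congr i _ _ h := by split_ifs; exacts [hQ.congr i h, hP.congr i h]

theorem half : IsCausalKernel fun (_ : ι) (_ : ι → ZMod 2) => (1 / 2 : ℝ) where
  nonneg _ _ := by norm_num
  sum_update _ _ := by rw [ZMod.sum_univ_two]; norm_num
  congr _ _ _ _ := rfl

theorem abs_half_sub_congr {Q : ι → (ι → ZMod 2) → ℝ} (hQ : IsCausalKernel Q) (i : ι)
    {u v : ι → ZMod 2} (h : ∀ j < i, u j = v j) : |1 / 2 - Q i u| = |1 / 2 - Q i v| := by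
  have hflip : ∀ b,
      |1 / 2 - Q i (Function.update u i b)| = |1 / 2 - Q i (Function.update u i 0)| := by
    have hsum : Q i (Function.update u i 0) + Q i (Function.update u i 1) = 1 :=
      (ZMod.sum_univ_two _).symm.trans (hQ.sum_update i u)
    intro b
    obtain rfl | rfl : b = 0 ∨ b = 1 := by revert b; decide
    · rfl
    · rw [← abs_neg]
      congr 1
      linarith
  have hv : Q i v = Q i (Function.update u i (v i)) := hQ.congr i fun j hj => by
    rcases hj.lt_or_eq with hj | rfl
    · simp [hj.ne, h j hj]
    · simp
  rw [hv, ← Function.update_eq_self i u, Function.update_idem, hflip (u i), hflip (v i)]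

end

section

variable {ι α : Type*} [Fintype ι] [LinearOrder ι] [Fintype α] [DecidableEq α]
  {Q : ι → (ι → α) → ℝ}

theorem sum_prod_eq_one (hQ : IsCausalKernel Q) {s : Finset ι} (hs : IsUpperSet (s : Set ι))
    (w : ι → α) : ∑ u with ∀ j ∉ s, u j = w j, ∏ j ∈ s, Q j u = 1 := by
  induction s using Finset.induction_on_min generalizing w with
  | empty => simp [← funext_iff, filter_eq']
  | insert a s ha ih =>
    have has : a ∉ s := fun h => lt_irrefl a (ha a h)
    have hs' : IsUpperSet (s : Set ι) := fun x y hxy hx => by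
      rcases mem_insert.1 (hs hxy (mem_insert_of_mem hx)) with rfl | hy
      · exact absurd hxy (ha x hx).not_ge
      · exact hy
    have hfiber : ∀ b, ({u | ∀ j ∉ insert a s, u j = w j} : Finset (ι → α)).filter (· a = b)
        = ({u | ∀ j ∉ s, u j = Function.update w a b j} : Finset (ι → α)) := by
      intro b
      ext u
      simp only [mem_filter, mem_univ, true_and, mem_insert, not_or]
      refine ⟨fun ⟨hw, hb⟩ j hj => ?_, fun h => ⟨fun j hj => ?_, ?_⟩⟩
      · rcases eq_or_ne j a with rfl | hja
        · simpa using hb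
        · simpa [hja] using hw j ⟨hja, hj⟩
      · simpa [hj.1] using h j hj.2
      · simpa using h a has
    rw [← sum_fiberwise _ (fun u => u a), ← hQ.sum_update a w]
    refine sum_congr rfl fun b _ => ?_
    rw [hfiber, ← mul_one (Q a _), ← ih hs' (Function.update w a b), mul_sum]
    refine sum_congr rfl fun u hu => ?_
    rw [prod_insert has, hQ.congr a fun j hj => (mem_filter.1 hu).2 j fun hjs => ?_]
    exact (ha j hjs).not_ge hj

theorem sum_mul_prod (hQ : IsCausalKernel Q) [Zero α] {s : Finset ι}
    (hs : IsUpperSet (s : Set ι)) {A : (ι → α) → ℝ}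
    (hA : ∀ u v, (∀ j ∉ s, u j = v j) → A u = A v) :
    ∑ u, A u * ∏ j ∈ s, Q j u = ∑ w with ∀ j ∈ s, w j = 0, A w := by
  have hmaps : ∀ u ∈ (univ : Finset (ι → α)),
      s.piecewise (0 : ι → α) u ∈ ({w | ∀ j ∈ s, w j = 0} : Finset (ι → α)) := fun u _ => by
    simp +contextual [Finset.piecewise]
  rw [← sum_fiberwise_of_maps_to hmaps]
  refine sum_congr rfl fun w hw => ?_
  have hw : ∀ j ∈ s, w j = 0 := (mem_filter.1 hw).2
  have hfiber : {u ∈ (univ : Finset (ι → α)) | s.piecewise (0 : ι → α) u = w}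
      = ({u | ∀ j ∉ s, u j = w j} : Finset (ι → α)) := by
    ext u
    simp only [mem_filter, mem_univ, true_and, funext_iff, Finset.piecewise]
    refine ⟨fun h j hj => by simpa [hj] using h j, fun h j => ?_⟩
    by_cases hj : j ∈ s
    · simp [hj, hw j hj]
    · simp [hj, h j hj]
  rw [hfiber, ← mul_one (A w), ← hQ.sum_prod_eq_one hs w, mul_sum]
  exact sum_congr rfl fun u hu => by rw [hA u w (mem_filter.1 hu).2]

end

theorem sum_frozen_term {ι : Type*} [Fintype ι] [LinearOrder ι]
    {P Q : ι → (ι → ZMod 2) → ℝ} (hP : IsCausalKernel P) (hQ : IsCausalKernel Q) {i : ι}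
    (hQi : ∀ u, Q i u = 1 / 2) :
    ∑ u, (∏ j with j < i, P j u) * |Q i u - P i u| * ∏ j with i < j, Q j u
      = 2 * ∑ w with ∀ j, i ≤ j → w j = 0, (∏ j with j < i, P j w) * |1 / 2 - P i w| := by
  have hIci : univ.filter (i ≤ ·) = insert i (univ.filter (i < ·)) := by
    ext j
    simp [le_iff_lt_or_eq, eq_comm, or_comm]
  have hterm : ∀ u, (∏ j with j < i, P j u) * |Q i u - P i u| * ∏ j with i < j, Q j u
      = 2 * ((∏ j with j < i, P j u) * |1 / 2 - P i u| * ∏ j with i ≤ j, Q j u) := fun u => by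
    rw [hIci, prod_insert (by simp), hQi]
    ring
  have hupper : IsUpperSet (univ.filter (i ≤ ·) : Set ι) := fun a b hab ha => by
    simp only [coe_filter, mem_univ, true_and, Set.mem_ofPred_eq] at ha ⊢
    exact ha.trans hab
  have hpast : ∀ u v : ι → ZMod 2, (∀ j ∉ univ.filter (i ≤ ·), u j = v j) →
      (∏ j with j < i, P j u) * |1 / 2 - P i u| = (∏ j with j < i, P j v) * |1 / 2 - P i v| := by
    intro u v h
    simp only [mem_filter, mem_univ, true_and, not_le] at h
    rw [hP.abs_half_sub_congr i h]
    congr 1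
    exact prod_congr rfl fun j hj => hP.congr j fun k hk => h k (hk.trans_lt (mem_filter.1 hj).2)
  rw [sum_congr rfl fun u _ => hterm u, ← mul_sum, hQ.sum_mul_prod hupper hpast]
  simp only [mem_filter, mem_univ, true_and]

end IsCausalKernel

section Post

variable {D : ℝ} {n : ℕ}

theorem Wi_pos (hD0 : 0 < D) (hD1 : D < 1) (y : Fin (2 ^ n) → ZMod 2) (i : Fin (2 ^ n))
    (u : Fin (2 ^ n) → ZMod 2) : 0 < Wi D n y i u := by
  refine mul_pos (by positivity) (sum_pos (fun v _ => prod_pos fun j _ => ?_) ⟨u, by simp⟩)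
  unfold bsc
  split_ifs <;> linarith

theorem Wi_congr (y : Fin (2 ^ n) → ZMod 2) (i : Fin (2 ^ n)) {u v : Fin (2 ^ n) → ZMod 2}
    (h : ∀ j ≤ i, u j = v j) : Wi D n y i u = Wi D n y i v := by
  unfold Wi
  congr 2
  ext w
  simp only [mem_filter, mem_univ, true_and]
  exact forall₂_congr fun j hj => by rw [h j hj]

theorem isCausalKernel_post (hD0 : 0 < D) (hD1 : D < 1) (y : Fin (2 ^ n) → ZMod 2) :
    IsCausalKernel (post D n y) where
  nonneg i u := div_nonneg (Wi_pos hD0 hD1 y i u).le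
    (add_pos (Wi_pos hD0 hD1 y i _) (Wi_pos hD0 hD1 y i _)).le
  sum_update i u := by
    simp only [post, Function.update_idem]
    rw [ZMod.sum_univ_two, ← add_div, div_self]
    exact (add_pos (Wi_pos hD0 hD1 y i _) (Wi_pos hD0 hD1 y i _)).ne'
  congr i u v h := by
    have hupdate : ∀ b, ∀ j ≤ i, Function.update u i b j = Function.update v i b j :=
      fun b j hj => by
        rcases eq_or_ne j i with rfl | hji
        · simp
        · simp [hji, h j hj]
    simp only [post, Wi_congr y i h, Wi_congr y i (hupdate 0), Wi_congr y i (hupdate 1)]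

end Post

/-- Pasts `u₀^{i−1}` are represented by the words `u` whose coordinates `≥ i` vanish. -/
theorem total_variation_bound_fixed_y (D : ℝ) (hD0 : 0 < D) (hD1 : D < 1)
    (n : ℕ) (F : Finset (Fin (2 ^ n))) (y : Fin (2 ^ n) → ZMod 2) :
    ∑ u : Fin (2 ^ n) → ZMod 2,
        |(∏ i, (if i ∈ F then (1 / 2 : ℝ) else post D n y i u)) - ∏ i, post D n y i u|
      ≤ 2 * ∑ i ∈ F,
          ∑ u ∈ Finset.univ.filter (fun u : Fin (2 ^ n) → ZMod 2 => ∀ j, i ≤ j → u j = 0),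
            (∏ j ∈ Finset.univ.filter (fun j => j < i), post D n y j u) *
              |1 / 2 - post D n y i u| := by
  have hP := isCausalKernel_post hD0 hD1 y
  have hQ := hP.ite IsCausalKernel.half F
  calc _ ≤ ∑ u, ∑ i, (∏ j with j < i, post D n y j u) *
          |(if i ∈ F then 1 / 2 else post D n y i u) - post D n y i u| *
          ∏ j with i < j, (if j ∈ F then 1 / 2 else post D n y j u) :=
        sum_le_sum fun u _ =>
          abs_prod_sub_prod_le _ (fun i _ => hP.nonneg i u) (fun i _ => hQ.nonneg i u)
    _ = ∑ i ∈ F, ∑ u, (∏ j with j < i, post D n y j u) *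
          |(if i ∈ F then 1 / 2 else post D n y i u) - post D n y i u| *
          ∏ j with i < j, (if j ∈ F then 1 / 2 else post D n y j u) := by
        rw [sum_comm]
        refine (sum_subset (subset_univ F) fun i _ hi => sum_eq_zero fun u _ => ?_).symm
        simp [hi]
    _ = _ := by
        rw [mul_sum]
        exact sum_congr rfl fun i hi => by convert hP.sum_frozen_term hQ fun u => if_pos hi

end
end

section
/- Let 0 < D < 1 and F ⊆ {0,…,N−1}. For every pair of vectors ũ_F, ũ'_F ∈ {0,1}^{|F|}, the average distortion of the Standard Model is the same: D_N(F, ũ_F) = D_N(F, ũ'_F). -/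
/-! Flipping the frozen bits by a word `c` supported on `F` is undone by the affine change of
variables `(ȳ, ū) ↦ (ȳ + cHₙ, ū + c)`. The BSC only sees whether input and output agree, so
the channel products, and with them every `W^{(i)}` and every posterior `P(u_i ∣ ·)` with
`i ∉ F`, are invariant under it, and so is the Hamming distance `d_H(ȳ, ūHₙ)`. -/

open Finset

noncomputable section

/-- The average distortion $D_N(F, ũ_F)$ of the Standard Model. -/
def avgDist (D : ℝ) (n : ℕ) (F : Finset (Fin (2 ^ n))) (ut : Fin (2 ^ n) → ZMod 2) : ℝ :=
  ∑ y : Fin (2 ^ n) → ZMod 2, ((2 : ℝ) ^ (2 ^ n))⁻¹ *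
    ∑ u ∈ Finset.univ.filter (fun u : Fin (2 ^ n) → ZMod 2 => ∀ i ∈ F, u i = ut i),
      (∏ i ∈ Fᶜ, post D n y i u) * (hammingDist y (polarEnc n u) : ℝ)

theorem hammingDist_add_right {ι G : Type*} [Fintype ι] [Add G] [IsRightCancelAdd G]
    [DecidableEq G] (x y e : ι → G) : hammingDist (x + e) (y + e) = hammingDist x y :=
  hammingDist_comp (fun i a => a + e i) fun i => add_left_injective (e i)

lemma bsc_add_add (D : ℝ) (y x e : ZMod 2) : bsc D (y + e) (x + e) = bsc D y x := by
  simp only [bsc, add_left_inj]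

lemma polarEnc_add (n : ℕ) (u v : Fin (2 ^ n) → ZMod 2) :
    polarEnc n (u + v) = polarEnc n u + polarEnc n v :=
  Matrix.add_vecMul (polarH n) u v

lemma Wi_add_polarEnc (D : ℝ) (n : ℕ) (y : Fin (2 ^ n) → ZMod 2) (i : Fin (2 ^ n))
    (u c : Fin (2 ^ n) → ZMod 2) :
    Wi D n (y + polarEnc n c) i (u + c) = Wi D n y i u := by
  unfold Wi
  congr 1
  symm
  refine Finset.sum_equiv (Equiv.addRight c) (fun v => ?_) (fun v _ => ?_)
  · simp only [mem_filter, mem_univ, true_and, Equiv.coe_addRight, Pi.add_apply, add_left_inj]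
  · simp only [Equiv.coe_addRight, polarEnc_add, Pi.add_apply, bsc_add_add]

lemma post_add_polarEnc (D : ℝ) (n : ℕ) (y : Fin (2 ^ n) → ZMod 2) (i : Fin (2 ^ n))
    (u c : Fin (2 ^ n) → ZMod 2) (hci : c i = 0) :
    post D n (y + polarEnc n c) i (u + c) = post D n y i u := by
  have update_add_c (b : ZMod 2) : Function.update (u + c) i b = Function.update u i b + c := by
    conv_rhs => rw [← Function.update_eq_self i c, hci]
    rw [← Function.update_add, add_zero]
  simp only [post, update_add_c, Wi_add_polarEnc]

theorem avgDist_independent_of_frozen_bits_general (D : ℝ) (n : ℕ)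
    (F : Finset (Fin (2 ^ n))) (ut ut' : Fin (2 ^ n) → ZMod 2) :
    avgDist D n F ut = avgDist D n F ut' := by
  set c := F.piecewise (ut' - ut) 0
  have hc_mem : ∀ i ∈ F, c i = ut' i - ut i := fun i hi => F.piecewise_eq_of_mem _ _ hi
  have hc_compl : ∀ i ∈ Fᶜ, c i = 0 := fun i hi =>
    F.piecewise_eq_of_notMem _ _ (Finset.mem_compl.mp hi)
  unfold avgDist
  refine Fintype.sum_equiv (Equiv.addRight (polarEnc n c)) _ _ fun y => ?_
  congr 1
  refine Finset.sum_equiv (Equiv.addRight c) (fun u => ?_) (fun u _ => ?_)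
  · simp only [mem_filter, mem_univ, true_and, Equiv.coe_addRight, Pi.add_apply]
    refine forall₂_congr fun i hi => ?_
    rw [hc_mem i hi, ← eq_sub_iff_add_eq, sub_sub_cancel]
  · simp only [Equiv.coe_addRight, polarEnc_add, hammingDist_add_right,
      Finset.prod_congr rfl fun i hi => post_add_polarEnc D n y i u c (hc_compl i hi)]

/-- **The value of the frozen bits does not matter**: the average distortion of the Standard
Model SM(F, ũ_F) is independent of the choice of the frozen vector `ũ_F`. -/
theorem avgDist_independent_of_frozen_bits (D : ℝ) (hD0 : 0 < D) (hD1 : D < 1) (n : ℕ)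
    (F : Finset (Fin (2 ^ n))) (ut ut' : Fin (2 ^ n) → ZMod 2) :
    avgDist D n F ut = avgDist D n F ut' :=
  avgDist_independent_of_frozen_bits_general D n F ut ut'

end
end

section
/- Let Y₁, Y₂ be finite sets and let W₁ : {0,1} → Y₁ → ℝ and W₂ : {0,1} → Y₂ → ℝ be binary-input channels (nonnegative entries, rows summing to 1) with Bhattacharyya parameters Z(Wᵢ) = Σ_y √(Wᵢ(y|0)Wᵢ(y|1)). Define the combined channel W : {0,1} → Y₁×Y₂ → ℝ by W(y₁,y₂ | x) = (1/2) Σ_{u∈{0,1}} W₁(y₁ | x ⊕ u) W₂(y₂ | u), with Bhattacharyya parameter Z(W) = Σ_{y₁,y₂} √(W(y₁,y₂|0)W(y₁,y₂|1)). Then Z(W) ≥ √(Z(W₁)² + Z(W₂)² − Z(W₁)²Z(W₂)²). -/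
/-!
Write `a, a'` for `W₁(y₁|0), W₁(y₁|1)` and `b, b'` for `W₂(y₂|0), W₂(y₂|1)`. Then
`4 W(y₁,y₂|0) W(y₁,y₂|1) = (√(aa') (b + b'))² + ((a - a') √(bb'))²`, so `2 √(W(·|0) W(·|1))` is
the Euclidean length of a plane vector, and the triangle inequality `∑ ‖vᵢ‖ ≥ ‖∑ vᵢ‖` over `y₂`
bounds the inner sum below by `√(4aa' + (a - a')² Z(W₂)²)`. Since `Z(W₂) ≤ 1`, this is again a
length: `4aa' + (a - a')² Z² = (2 √(1 - Z²) √(aa'))² + (Z (a + a'))²`, and the triangle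
inequality over `y₁` gives `2 √(Z(W₁)² + Z² - Z(W₁)² Z²)`.
-/

open Finset Real

theorem sqrt_sum_sq_add_sum_sq_le {ι : Type*} (s : Finset ι) (p q : ι → ℝ) :
    √((∑ i ∈ s, p i) ^ 2 + (∑ i ∈ s, q i) ^ 2) ≤ ∑ i ∈ s, √(p i ^ 2 + q i ^ 2) := by
  simpa [Complex.norm_eq_sqrt_sq_add_sq, Complex.re_sum, Complex.im_sum] using
    norm_sum_le s fun i ↦ (⟨p i, q i⟩ : ℂ)

theorem two_mul_sqrt (x : ℝ) : 2 * √x = √(4 * x) := by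
  rw [sqrt_mul zero_le_four, show (4 : ℝ) = 2 ^ 2 by norm_num, sqrt_sq zero_le_two]

noncomputable def bhattacharyya {Y : Type*} [Fintype Y] (W : ZMod 2 → Y → ℝ) : ℝ :=
  ∑ y, √(W 0 y * W 1 y)

noncomputable def combine {Y₁ Y₂ : Type*} (W₁ : ZMod 2 → Y₁ → ℝ) (W₂ : ZMod 2 → Y₂ → ℝ)
    (x : ZMod 2) (y₁ : Y₁) (y₂ : Y₂) : ℝ :=
  1 / 2 * ∑ u : ZMod 2, W₁ (x + u) y₁ * W₂ u y₂

section Bhattacharyya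

variable {Y : Type*} [Fintype Y] {W : ZMod 2 → Y → ℝ}

theorem bhattacharyya_nonneg : 0 ≤ bhattacharyya W :=
  sum_nonneg fun _ _ ↦ sqrt_nonneg _

theorem bhattacharyya_le_one (hW : ∀ x y, 0 ≤ W x y) (hsW : ∀ x, ∑ y, W x y = 1) :
    bhattacharyya W ≤ 1 := by
  simpa [bhattacharyya, sqrt_mul (hW _ _), hsW] using sum_sqrt_mul_sqrt_le univ (hW 0) (hW 1)

theorem two_mul_sqrt_bhattacharyya_sq_add_sq_sub_le (hW : ∀ x y, 0 ≤ W x y)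
    (hsW : ∀ x, ∑ y, W x y = 1) {z : ℝ} (hz : z ^ 2 ≤ 1) :
    2 * √(bhattacharyya W ^ 2 + z ^ 2 - bhattacharyya W ^ 2 * z ^ 2)
      ≤ ∑ y, √(4 * (W 0 y * W 1 y) + ((W 0 y - W 1 y) * z) ^ 2) := by
  have h1z : 0 ≤ 1 - z ^ 2 := sub_nonneg.mpr hz
  have hterm : ∀ y, 4 * (W 0 y * W 1 y) + ((W 0 y - W 1 y) * z) ^ 2
      = (2 * √(1 - z ^ 2) * √(W 0 y * W 1 y)) ^ 2 + (z * (W 0 y + W 1 y)) ^ 2 := fun y ↦ by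
    simp only [mul_pow, sq_sqrt h1z, sq_sqrt (mul_nonneg (hW _ _) (hW _ _))]
    ring
  simp only [hterm]
  refine le_of_eq_of_le ?_ (sqrt_sum_sq_add_sum_sq_le _ _ _)
  rw [← mul_sum, ← mul_sum, sum_add_distrib, hsW, hsW, ← bhattacharyya, two_mul_sqrt]
  simp only [mul_pow, sq_sqrt h1z]
  ring_nf

end Bhattacharyya

section Combine

variable {Y₁ Y₂ : Type*} {W₁ : ZMod 2 → Y₁ → ℝ} {W₂ : ZMod 2 → Y₂ → ℝ}

theorem combine_zero (y₁ : Y₁) (y₂ : Y₂) :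
    combine W₁ W₂ 0 y₁ y₂ = 1 / 2 * (W₁ 0 y₁ * W₂ 0 y₂ + W₁ 1 y₁ * W₂ 1 y₂) :=
  congrArg (1 / 2 * ·) (Fin.sum_univ_two fun u : ZMod 2 ↦ W₁ (0 + u) y₁ * W₂ u y₂)

theorem combine_one (y₁ : Y₁) (y₂ : Y₂) :
    combine W₁ W₂ 1 y₁ y₂ = 1 / 2 * (W₁ 1 y₁ * W₂ 0 y₂ + W₁ 0 y₁ * W₂ 1 y₂) :=
  congrArg (1 / 2 * ·) (Fin.sum_univ_two fun u : ZMod 2 ↦ W₁ (1 + u) y₁ * W₂ u y₂)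

theorem two_mul_sqrt_combine_mul_combine (h₁ : ∀ x y, 0 ≤ W₁ x y) (h₂ : ∀ x y, 0 ≤ W₂ x y)
    (y₁ : Y₁) (y₂ : Y₂) :
    2 * √(combine W₁ W₂ 0 y₁ y₂ * combine W₁ W₂ 1 y₁ y₂)
      = √((√(W₁ 0 y₁ * W₁ 1 y₁) * (W₂ 0 y₂ + W₂ 1 y₂)) ^ 2
          + ((W₁ 0 y₁ - W₁ 1 y₁) * √(W₂ 0 y₂ * W₂ 1 y₂)) ^ 2) := by
  rw [mul_pow, mul_pow, sq_sqrt (mul_nonneg (h₁ _ _) (h₁ _ _)),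
    sq_sqrt (mul_nonneg (h₂ _ _) (h₂ _ _)), two_mul_sqrt, combine_zero, combine_one]
  ring_nf

theorem sqrt_le_two_mul_sum_sqrt_combine [Fintype Y₂] (h₁ : ∀ x y, 0 ≤ W₁ x y)
    (h₂ : ∀ x y, 0 ≤ W₂ x y) (hs₂ : ∀ x, ∑ y, W₂ x y = 1) (y₁ : Y₁) :
    √(4 * (W₁ 0 y₁ * W₁ 1 y₁) + ((W₁ 0 y₁ - W₁ 1 y₁) * bhattacharyya W₂) ^ 2)
      ≤ 2 * ∑ y₂, √(combine W₁ W₂ 0 y₁ y₂ * combine W₁ W₂ 1 y₁ y₂) := by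
  simp only [mul_sum, two_mul_sqrt_combine_mul_combine h₁ h₂]
  refine le_of_eq_of_le ?_ (sqrt_sum_sq_add_sum_sq_le _ _ _)
  rw [← mul_sum, ← mul_sum, sum_add_distrib, hs₂, hs₂, ← bhattacharyya]
  simp only [mul_pow, sq_sqrt (mul_nonneg (h₁ _ _) (h₁ _ _))]
  ring_nf

end Combine

/-- **Lower bound on the Bhattacharyya parameter of the combined channel.**  For binary-input
channels `W₁, W₂` and the channel `W(y₁,y₂∣x) = (1/2)Σ_u W₁(y₁∣x⊕u)W₂(y₂∣u)` seen by
`X = X₁ ⊕ X₂`, one has `Z(W) ≥ √(Z(W₁)² + Z(W₂)² − Z(W₁)²Z(W₂)²)`. -/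
theorem bhattacharyya_lower_bound
    {Y₁ Y₂ : Type*} [Fintype Y₁] [Fintype Y₂]
    (W₁ : ZMod 2 → Y₁ → ℝ) (W₂ : ZMod 2 → Y₂ → ℝ)
    (h₁ : ∀ x y, 0 ≤ W₁ x y) (h₂ : ∀ x y, 0 ≤ W₂ x y)
    (hs₁ : ∀ x, ∑ y, W₁ x y = 1) (hs₂ : ∀ x, ∑ y, W₂ x y = 1) :
    Real.sqrt ((∑ y, Real.sqrt (W₁ 0 y * W₁ 1 y)) ^ 2 + (∑ y, Real.sqrt (W₂ 0 y * W₂ 1 y)) ^ 2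
        - (∑ y, Real.sqrt (W₁ 0 y * W₁ 1 y)) ^ 2 * (∑ y, Real.sqrt (W₂ 0 y * W₂ 1 y)) ^ 2)
      ≤ ∑ y₁ : Y₁, ∑ y₂ : Y₂,
          Real.sqrt ((1 / 2 * ∑ u : ZMod 2, W₁ (0 + u) y₁ * W₂ u y₂) *
            (1 / 2 * ∑ u : ZMod 2, W₁ (1 + u) y₁ * W₂ u y₂)) := by
  change √(bhattacharyya W₁ ^ 2 + bhattacharyya W₂ ^ 2 - _) ≤
    ∑ y₁, ∑ y₂, √(combine W₁ W₂ 0 y₁ y₂ * combine W₁ W₂ 1 y₁ y₂)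
  have hZ₂ : bhattacharyya W₂ ^ 2 ≤ 1 :=
    pow_le_one₀ bhattacharyya_nonneg (bhattacharyya_le_one h₂ hs₂)
  refine le_of_mul_le_mul_left ?_ zero_lt_two
  calc 2 * √(bhattacharyya W₁ ^ 2 + bhattacharyya W₂ ^ 2 - _)
      ≤ ∑ y₁, √(4 * (W₁ 0 y₁ * W₁ 1 y₁) + ((W₁ 0 y₁ - W₁ 1 y₁) * bhattacharyya W₂) ^ 2) :=
        two_mul_sqrt_bhattacharyya_sq_add_sq_sub_le h₁ hs₁ hZ₂
    _ ≤ ∑ y₁, 2 * ∑ y₂, √(combine W₁ W₂ 0 y₁ y₂ * combine W₁ W₂ 1 y₁ y₂) :=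
        sum_le_sum fun y₁ _ ↦ sqrt_le_two_mul_sum_sqrt_combine h₁ h₂ hs₂ y₁
    _ = 2 * ∑ y₁, ∑ y₂, √(combine W₁ W₂ 0 y₁ y₂ * combine W₁ W₂ 1 y₁ y₂) := (mul_sum ..).symm
end
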